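/- Fix G ∈ ℝ^{m×K}, g_0 = G w̃ with w̃ ∈ W, λ ≥ 0, ρ > 0, and stepsize β > 0. Let w*_{ρ,λ} be the minimizer over W of f(w) = (1/2)‖Gw + λ g_0‖² + (ρ/2)‖w‖². Let w_s be a W-valued random variable, and let X, X' be two independent random matrices in ℝ^{m×K}, independent of w_s, with E[X] = E[X'] = G, E‖X − G‖² ≤ Kσ_0², E‖X' − G‖² ≤ Kσ_0², and ‖G‖ ≤ C_g. Define w_{s+1} = Π_W( w_s − β [ Xᵀ( X' w_s + λ X' w̃ ) + ρ w_s ] ), where Π_W is the Euclidean projection onto W. Then E‖w_{s+1} − w*_{ρ,λ}‖² ≤ (1 − 2βρ) E‖w_s − w*_{ρ,λ}‖² + 3β² C_1, where C_1 = 4(1+λ²)(Kσ_0² + C_g²)² + ρ². -/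

import Mathlib

open MeasureTheory ProbabilityTheory BigOperators
open scoped RealInnerProductSpace ENNReal NNReal

noncomputable section

/-- `ℝ^m` with the Euclidean inner product and norm. -/
abbrev Euc (m : ℕ) := EuclideanSpace ℝ (Fin m)

/-- The probability simplex `W ⊆ ℝ^K`. -/
def simplex (K : ℕ) : Set (Euc K) := {w | (∀ i, 0 ≤ w i) ∧ ∑ i, w i = 1}

/-- `g_w = ∑ i, w i • g i`, i.e. the matrix-vector product `G w`, where `G` is the
`m × K` matrix with columns `g i`. -/
def comb {m K : ℕ} (g : Fin K → Euc m) (w : Euc K) : Euc m := ∑ i, w i • g i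

/-- Squared Frobenius norm of the `m × K` matrix with columns `g i`. -/
def frobSq {m K : ℕ} (g : Fin K → Euc m) : ℝ := ∑ i, ‖g i‖ ^ 2

/-- Frobenius norm of the `m × K` matrix with columns `g i`. -/
def frob {m K : ℕ} (g : Fin K → Euc m) : ℝ := Real.sqrt (frobSq g)

/-- `Gᵀ v ∈ ℝ^K`, where `G` is the matrix with columns `g i`. -/
def tvec {m K : ℕ} (g : Fin K → Euc m) (v : Euc m) : Euc K :=
  (EuclideanSpace.equiv (Fin K) ℝ).symm fun i => ⟪g i, v⟫

/-- `p` is the Euclidean projection of `z` onto the set `C`. -/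
def projOn {n : ℕ} (C : Set (Euc n)) (z p : Euc n) : Prop :=
  p ∈ C ∧ ∀ u ∈ C, ‖z - p‖ ≤ ‖z - u‖

/-!
Projection onto the convex set `W` does not increase the distance to the point `w*` of `W`, so
`‖w_{s+1} - w*‖² ≤ ‖w_s - w*‖² - 2β⟪w_s - w*, ĝ⟫ + β²‖ĝ‖²` for the stochastic gradient `ĝ`.
Written in coordinates, `⟪w_s - w*, ĝ⟫` is a sum of terms `⟪X_i, X'_j⟫ · φ_{ij}(w_s)`; since
`(X, X')` is independent of `w_s` and `X` of `X'`, each has expectation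
`⟪g_i, g_j⟫ · E φ_{ij}(w_s)`, so the cross term has the same expectation as `⟪w_s - w*, ∇f(w_s)⟫`. First-order optimality of
`w*` and `ρ`-strong convexity bound the latter below by `ρ‖w_s - w*‖²`. Finally
`‖ĝ‖² ≤ 2(1+|λ|)²‖X‖²‖X'‖² + 2ρ²`, whose expectation factorises by independence, and
`E‖X‖² = E‖X - G‖² + ‖G‖² ≤ Kσ₀² + C_g²`.
-/

open Filter Topology

section Columns

variable {m K : ℕ}

lemma tvec_apply (g : Fin K → Euc m) (v : Euc m) (i : Fin K) : tvec g v i = ⟪g i, v⟫ := rfl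

lemma inner_tvec (g : Fin K → Euc m) (v : Euc m) (h : Euc K) :
    ⟪tvec g v, h⟫ = ⟪v, comb g h⟫ := by
  rw [comb, inner_sum, PiLp.inner_apply]
  refine Finset.sum_congr rfl fun i _ => ?_
  rw [real_inner_smul_right, tvec_apply, RCLike.inner_apply, conj_trivial,
    real_inner_comm (g i) v, mul_comm]

lemma inner_tvec_comb (x x' : Fin K → Euc m) (v d : Euc K) :
    ⟪d, tvec x (comb x' v)⟫ = ∑ i, ∑ j, ⟪x i, x' j⟫ * (v j * d i) := by
  rw [PiLp.inner_apply]
  refine Finset.sum_congr rfl fun i _ => ?_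
  rw [tvec_apply, comb, inner_sum, RCLike.inner_apply, conj_trivial, Finset.sum_mul]
  refine Finset.sum_congr rfl fun j _ => ?_
  rw [real_inner_smul_right]
  ring

def combₗ (g : Fin K → Euc m) : Euc K →ₗ[ℝ] Euc m where
  toFun := comb g
  map_add' a b := by simp only [comb, PiLp.add_apply, add_smul, Finset.sum_add_distrib]
  map_smul' t a := by
    simp only [comb, PiLp.smul_apply, smul_eq_mul, mul_smul, Finset.smul_sum, RingHom.id_apply]

lemma combₗ_apply (g : Fin K → Euc m) (w : Euc K) : combₗ g w = comb g w := rfl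

lemma comb_add_smul (g : Fin K → Euc m) (v w : Euc K) (t : ℝ) :
    comb g (v + t • w) = comb g v + t • comb g w := by
  simp only [← combₗ_apply, map_add, map_smul]

lemma frobSq_nonneg (x : Fin K → Euc m) : 0 ≤ frobSq x :=
  Finset.sum_nonneg fun _ _ => sq_nonneg _

lemma frobSq_le_sq_of_frob_le {x : Fin K → Euc m} {C : ℝ} (h : frob x ≤ C) :
    frobSq x ≤ C ^ 2 := by
  rw [← Real.sq_sqrt (frobSq_nonneg x)]
  exact pow_le_pow_left₀ (Real.sqrt_nonneg _) h 2

lemma continuous_frobSq : Continuous (frobSq : (Fin K → Euc m) → ℝ) := by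
  unfold frobSq; fun_prop

lemma norm_comb_sq_le (x : Fin K → Euc m) (v : Euc K) :
    ‖comb x v‖ ^ 2 ≤ frobSq x * ‖v‖ ^ 2 := by
  have htri : ‖comb x v‖ ≤ ∑ i, |v i| * ‖x i‖ :=
    (norm_sum_le _ _).trans_eq (Finset.sum_congr rfl fun i _ => by rw [norm_smul, Real.norm_eq_abs])
  have hcs : (∑ i, |v i| * ‖x i‖) ^ 2 ≤ (∑ i, |v i| ^ 2) * ∑ i, ‖x i‖ ^ 2 :=
    Finset.sum_mul_sq_le_sq_mul_sq _ _ _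
  have hv : ‖v‖ ^ 2 = ∑ i, |v i| ^ 2 := by simp [EuclideanSpace.norm_sq_eq]
  rw [frobSq, mul_comm, hv]
  exact (pow_le_pow_left₀ (norm_nonneg _) htri 2).trans hcs

lemma norm_tvec_sq_le (x : Fin K → Euc m) (u : Euc m) :
    ‖tvec x u‖ ^ 2 ≤ frobSq x * ‖u‖ ^ 2 := by
  rw [EuclideanSpace.norm_sq_eq, frobSq, Finset.sum_mul]
  refine Finset.sum_le_sum fun i _ => ?_
  rw [Real.norm_eq_abs, sq_abs, tvec_apply, ← mul_pow, ← sq_abs]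
  exact pow_le_pow_left₀ (abs_nonneg _) (abs_real_inner_le_norm _ _) 2

/-- `sgrad X X' λ ρ w̃ w = Xᵀ(X'w + λX'w̃) + ρw` is the stochastic gradient at `w`;
`sgrad g g λ ρ w̃ w` is the gradient `∇f(w)` of the regularized objective. -/
def sgrad (x x' : Fin K → Euc m) (lam ρ : ℝ) (wt w : Euc K) : Euc K :=
  tvec x (comb x' w + lam • comb x' wt) + ρ • w

lemma inner_sgrad (x x' : Fin K → Euc m) (lam ρ : ℝ) (wt d w : Euc K) :
    ⟪d, sgrad x x' lam ρ wt w⟫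
      = ∑ i, ∑ j, ⟪x i, x' j⟫ * ((w j + lam * wt j) * d i) + ρ * ⟪d, w⟫ := by
  rw [sgrad, ← comb_add_smul, inner_add_right, inner_tvec_comb, real_inner_smul_right]
  rfl

lemma continuous_sgrad (lam ρ : ℝ) (wt : Euc K) :
    Continuous fun p : (Fin K → Euc m) × (Fin K → Euc m) × Euc K =>
      sgrad p.1 p.2.1 lam ρ wt p.2.2 := by
  unfold sgrad tvec comb; fun_prop

end Columns

section Simplex

variable {K : ℕ}

lemma convex_simplex : Convex ℝ (simplex K) :=
  (convex_stdSimplex ℝ (Fin K)).linear_preimage (EuclideanSpace.equiv (Fin K) ℝ).toLinearMap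

lemma isCompact_simplex : IsCompact (simplex K) :=
  (EuclideanSpace.equiv (Fin K) ℝ).toHomeomorph.isCompact_preimage.mpr (isCompact_stdSimplex ℝ _)

lemma norm_le_one_of_mem_simplex {w : Euc K} (hw : w ∈ simplex K) : ‖w‖ ≤ 1 := by
  have hle : ∀ i, w i ≤ 1 := fun i =>
    hw.2 ▸ Finset.single_le_sum (fun j _ => hw.1 j) (Finset.mem_univ i)
  have hsq : ‖w‖ ^ 2 ≤ 1 := by
    rw [EuclideanSpace.norm_sq_eq, ← hw.2]
    refine Finset.sum_le_sum fun i _ => ?_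
    rw [Real.norm_eq_abs, sq_abs]
    nlinarith [hw.1 i, hle i]
  nlinarith [norm_nonneg w]

end Simplex

lemma norm_sub_sq_le_of_projOn {n : ℕ} {C : Set (Euc n)} (hC : Convex ℝ C) {z p u : Euc n}
    (hp : projOn C z p) (hu : u ∈ C) : ‖p - u‖ ^ 2 ≤ ‖z - u‖ ^ 2 := by
  obtain ⟨hpC, hmin⟩ := hp
  have : Nonempty C := ⟨⟨p, hpC⟩⟩
  have hinf : ‖z - p‖ = ⨅ w : C, ‖z - w‖ := by
    apply le_antisymm
    · exact le_ciInf fun w => hmin w w.2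
    · exact ciInf_le ⟨0, by rintro _ ⟨w, rfl⟩; exact norm_nonneg _⟩ (⟨p, hpC⟩ : C)
  have hobtuse := (norm_eq_iInf_iff_real_inner_le_zero hC hpC).mp hinf u hu
  have hsplit : z - u = (z - p) + (p - u) := by abel
  rw [hsplit, norm_add_sq_real, ← neg_sub u p, inner_neg_right]
  nlinarith [sq_nonneg ‖z - p‖]

lemma nonneg_of_forall_mul_add_sq_mul_nonneg {c Q : ℝ}
    (h : ∀ t : ℝ, 0 < t → t ≤ 1 → 0 ≤ t * c + t ^ 2 * Q) : 0 ≤ c := by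
  have hlim : Tendsto (fun t => c + t * Q) (𝓝[>] 0) (𝓝 c) := by
    have : Tendsto (fun t : ℝ => c + t * Q) (𝓝 0) (𝓝 (c + 0 * Q)) :=
      (continuous_const.add (continuous_id.mul continuous_const)).tendsto 0
    simpa using this.mono_left nhdsWithin_le_nhds
  refine ge_of_tendsto hlim ?_
  filter_upwards [Ioc_mem_nhdsGT one_pos] with t ⟨ht0, ht1⟩
  have hfactor : t * c + t ^ 2 * Q = t * (c + t * Q) := by ring
  exact nonneg_of_mul_nonneg_right (hfactor ▸ h t ht0 ht1) ht0

/-- `At (A w + b) + ρ • w` is the gradient at `w` of the objective minimized at `w₀`. -/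
lemma mul_norm_sub_sq_le_inner_of_isMinOn {E F : Type*} [NormedAddCommGroup E]
    [InnerProductSpace ℝ E] [NormedAddCommGroup F] [InnerProductSpace ℝ F] (A : E →ₗ[ℝ] F)
    (At : F → E) (hA : ∀ v h, ⟪At v, h⟫ = ⟪v, A h⟫) {C : Set E} (hC : Convex ℝ C) (b : F) (ρ : ℝ)
    {w₀ w : E} (hw₀ : w₀ ∈ C)
    (hmin : IsMinOn (fun u => 1 / 2 * ‖A u + b‖ ^ 2 + ρ / 2 * ‖u‖ ^ 2) C w₀) (hw : w ∈ C) :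
    ρ * ‖w - w₀‖ ^ 2 ≤ ⟪w - w₀, At (A w + b) + ρ • w⟫ := by
  obtain ⟨h, rfl⟩ : ∃ h, w = w₀ + h := ⟨w - w₀, (add_sub_cancel w₀ w).symm⟩
  rw [add_sub_cancel_left]
  -- first-order optimality: the objective at `w₀ + t • h` exceeds its value at `w₀` by
  -- `t` times this quantity plus `t ^ 2 * Q`
  have hc : 0 ≤ ⟪A w₀ + b, A h⟫ + ρ * ⟪w₀, h⟫ := by
    refine nonneg_of_forall_mul_add_sq_mul_nonneg (Q := 1 / 2 * ‖A h‖ ^ 2 + ρ / 2 * ‖h‖ ^ 2)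
      fun t ht0 ht1 => ?_
    have hmem : w₀ + t • h ∈ C := by simpa using hC.add_smul_sub_mem hw₀ hw ⟨ht0.le, ht1⟩
    have hle := isMinOn_iff.mp hmin _ hmem
    have hA' : A (w₀ + t • h) + b = (A w₀ + b) + t • A h := by rw [map_add, map_smul]; abel
    rw [hA', norm_add_sq_real (A w₀ + b), norm_add_sq_real w₀, real_inner_smul_right,
      real_inner_smul_right, norm_smul, norm_smul, mul_pow, mul_pow, Real.norm_eq_abs,
      sq_abs] at hle
    linarith
  calc ρ * ‖h‖ ^ 2 ≤ (⟪A w₀ + b, A h⟫ + ρ * ⟪w₀, h⟫) + ‖A h‖ ^ 2 + ρ * ‖h‖ ^ 2 := by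
        nlinarith [sq_nonneg ‖A h‖]
    _ = ⟪h, At (A (w₀ + h) + b) + ρ • (w₀ + h)⟫ := by
        rw [inner_add_right, real_inner_comm (At _) h, hA, real_inner_smul_right, map_add]
        simp only [inner_add_left, inner_add_right, real_inner_self_eq_norm_sq,
          real_inner_comm w₀ h]
        ring

section Integration

variable {Ω : Type*} [MeasurableSpace Ω] {μ : Measure Ω}

lemma MeasureTheory.MemLp.integrable_norm_sq {F : Type*} [NormedAddCommGroup F] {f : Ω → F}
    (hf : MemLp f 2 μ) :
    Integrable (fun ω => ‖f ω‖ ^ 2) μ :=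
  (memLp_two_iff_integrable_sq_norm hf.1).mp hf

variable {E : Type*} [NormedAddCommGroup E] [InnerProductSpace ℝ E]

lemma MeasureTheory.MemLp.integrable_inner {f g : Ω → E} (hf : MemLp f 2 μ) (hg : MemLp g 2 μ) :
    Integrable (fun ω => ⟪f ω, g ω⟫) μ := by
  refine (hf.integrable_norm_sq.add hg.integrable_norm_sq).mono' (hf.1.inner hg.1)
    (ae_of_all _ fun ω => ?_)
  rw [Real.norm_eq_abs]
  refine (abs_real_inner_le_norm _ _).trans ?_
  dsimp only [Pi.add_apply]
  nlinarith [sq_nonneg (‖f ω‖ - ‖g ω‖), norm_nonneg (f ω), norm_nonneg (g ω)]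

lemma integral_norm_sub_smul_sq {d Y : Ω → E} (hd : MemLp d 2 μ) (hY : MemLp Y 2 μ) (β : ℝ) :
    ∫ ω, ‖d ω - β • Y ω‖ ^ 2 ∂μ
      = ∫ ω, ‖d ω‖ ^ 2 ∂μ - 2 * β * ∫ ω, ⟪d ω, Y ω⟫ ∂μ + β ^ 2 * ∫ ω, ‖Y ω‖ ^ 2 ∂μ := by
  have hpt : ∀ ω, ‖d ω - β • Y ω‖ ^ 2
      = ‖d ω‖ ^ 2 - 2 * β * ⟪d ω, Y ω⟫ + β ^ 2 * ‖Y ω‖ ^ 2 := fun ω => by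
    rw [norm_sub_sq_real, real_inner_smul_right, norm_smul, mul_pow, Real.norm_eq_abs, sq_abs]
    ring
  have hdY : Integrable (fun ω => 2 * β * ⟪d ω, Y ω⟫) μ := (hd.integrable_inner hY).const_mul _
  have hsub : Integrable (fun ω => ‖d ω‖ ^ 2 - 2 * β * ⟪d ω, Y ω⟫) μ :=
    hd.integrable_norm_sq.sub hdY
  simp_rw [hpt]
  rw [integral_add hsub (hY.integrable_norm_sq.const_mul _),
    integral_sub hd.integrable_norm_sq hdY, integral_const_mul, integral_const_mul]

lemma integral_norm_sq_eq_integral_norm_sub_sq_add [IsProbabilityMeasure μ] [CompleteSpace E]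
    {Y : Ω → E} (hY : MemLp Y 2 μ) :
    ∫ ω, ‖Y ω‖ ^ 2 ∂μ = ∫ ω, ‖Y ω - ∫ ω, Y ω ∂μ‖ ^ 2 ∂μ + ‖∫ ω, Y ω ∂μ‖ ^ 2 := by
  set c := ∫ ω, Y ω ∂μ
  have hinner : ∫ ω, ⟪Y ω, c⟫ ∂μ = ‖c‖ ^ 2 := by
    simp_rw [real_inner_comm c]
    rw [integral_inner (hY.integrable one_le_two), real_inner_self_eq_norm_sq]
  have h := integral_norm_sub_smul_sq hY (memLp_const c) 1
  simp only [one_smul, integral_const, probReal_univ, hinner] at h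
  linarith

end Integration

section Stochastic

variable {m K : ℕ}

lemma norm_sgrad_sq_le (x x' : Fin K → Euc m) (lam ρ : ℝ) {wt w : Euc K}
    (hwt : wt ∈ simplex K) (hw : w ∈ simplex K) :
    ‖sgrad x x' lam ρ wt w‖ ^ 2 ≤ 2 * (1 + |lam|) ^ 2 * (frobSq x * frobSq x') + 2 * ρ ^ 2 := by
  set v := w + lam • wt
  have hv : ‖v‖ ≤ 1 + |lam| := by
    refine (norm_add_le _ _).trans ?_
    rw [norm_smul, Real.norm_eq_abs]
    nlinarith [norm_le_one_of_mem_simplex hw, norm_le_one_of_mem_simplex hwt, abs_nonneg lam,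
      norm_nonneg wt]
  have hT : ‖tvec x (comb x' v)‖ ^ 2 ≤ (1 + |lam|) ^ 2 * (frobSq x * frobSq x') := by
    have hfx := frobSq_nonneg x
    have hfx' := frobSq_nonneg x'
    calc ‖tvec x (comb x' v)‖ ^ 2 ≤ frobSq x * (frobSq x' * ‖v‖ ^ 2) :=
          (norm_tvec_sq_le _ _).trans (mul_le_mul_of_nonneg_left (norm_comb_sq_le _ _) hfx)
      _ ≤ frobSq x * (frobSq x' * (1 + |lam|) ^ 2) := by gcongr
      _ = (1 + |lam|) ^ 2 * (frobSq x * frobSq x') := by ring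
  have hρw : ‖ρ • w‖ ^ 2 ≤ ρ ^ 2 := by
    rw [norm_smul, mul_pow, Real.norm_eq_abs, sq_abs]
    have hw2 : ‖w‖ ^ 2 ≤ 1 := pow_le_one₀ (norm_nonneg w) (norm_le_one_of_mem_simplex hw)
    nlinarith [mul_le_mul_of_nonneg_left hw2 (sq_nonneg ρ)]
  have hsum := norm_add_le (tvec x (comb x' v)) (ρ • w)
  rw [sgrad, ← comb_add_smul]
  nlinarith [pow_le_pow_left₀ (norm_nonneg _) hsum 2,
    sq_nonneg (‖tvec x (comb x' v)‖ - ‖ρ • w‖)]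

variable {Ω : Type*} [MeasurableSpace Ω] {μ : Measure Ω}

lemma integral_frobSq_eq [IsProbabilityMeasure μ] {Y : Ω → Fin K → Euc m} (hY : Integrable Y μ)
    (hY2 : Integrable (fun ω => frobSq (Y ω)) μ) :
    ∫ ω, frobSq (Y ω) ∂μ
      = ∫ ω, frobSq (fun i => Y ω i - (∫ ω, Y ω ∂μ) i) ∂μ + frobSq (∫ ω, Y ω ∂μ) := by
  have hcol : ∀ i, MemLp (fun ω => Y ω i) 2 μ := fun i => by
    refine (memLp_two_iff_integrable_sq_norm (hY.eval i).1).mpr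
      (hY2.mono' ((hY.eval i).1.norm.pow 2) (ae_of_all _ fun ω => ?_))
    rw [Real.norm_eq_abs, abs_of_nonneg (sq_nonneg _)]
    exact Finset.single_le_sum (f := fun j => ‖Y ω j‖ ^ 2) (fun j _ => sq_nonneg _)
      (Finset.mem_univ i)
  simp only [frobSq]
  rw [integral_finsetSum _ fun i _ => (hcol i).integrable_norm_sq,
    integral_finsetSum _ fun i _ => (show Integrable (fun ω => ‖Y ω i - (∫ ω, Y ω ∂μ) i‖ ^ 2) μ
      from ((hcol i).sub (memLp_const _)).integrable_norm_sq),
    ← Finset.sum_add_distrib]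
  refine Finset.sum_congr rfl fun i _ => ?_
  rw [eval_integral hY.eval]
  exact integral_norm_sq_eq_integral_norm_sub_sq_add (hcol i)

lemma integral_frobSq_le [IsProbabilityMeasure μ] {Y : Ω → Fin K → Euc m} {g : Fin K → Euc m}
    {s C : ℝ} (hY : Integrable Y μ) (hY2 : Integrable (fun ω => frobSq (Y ω)) μ)
    (hEY : ∫ ω, Y ω ∂μ = g) (hvar : ∫ ω, frobSq (fun i => Y ω i - g i) ∂μ ≤ s)
    (hg : frob g ≤ C) : ∫ ω, frobSq (Y ω) ∂μ ≤ s + C ^ 2 := by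
  rw [integral_frobSq_eq hY hY2, hEY]
  linarith [frobSq_le_sq_of_frob_le hg]

lemma memLp_comp_of_mem_simplex [IsFiniteMeasure μ] {F : Type*} [NormedAddCommGroup F]
    {f : Euc K → F} (hf : Continuous f) {W : Ω → Euc K} (hW : AEStronglyMeasurable W μ)
    (hWs : ∀ ω, W ω ∈ simplex K) (p : ℝ≥0∞) : MemLp (fun ω => f (W ω)) p μ := by
  obtain ⟨C, hC⟩ := isCompact_simplex.exists_bound_of_continuousOn hf.continuousOn
  exact MemLp.of_bound (hf.comp_aestronglyMeasurable hW) C (ae_of_all _ fun ω => hC _ (hWs ω))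

lemma integrable_comp_of_mem_simplex [IsFiniteMeasure μ] {F : Type*} [NormedAddCommGroup F]
    {f : Euc K → F} (hf : Continuous f) {W : Ω → Euc K} (hW : AEStronglyMeasurable W μ)
    (hWs : ∀ ω, W ω ∈ simplex K) : Integrable (fun ω => f (W ω)) μ :=
  memLp_one_iff_integrable.mp (memLp_comp_of_mem_simplex hf hW hWs 1)

variable {X X' : Ω → Fin K → Euc m} {ws : Ω → Euc K} {wt : Euc K} {lam ρ : ℝ}

lemma ProbabilityTheory.IndepFun.frobSq_comp (hXX' : IndepFun X X' μ) :
    IndepFun (fun ω => frobSq (X ω)) (fun ω => frobSq (X' ω)) μ :=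
  hXX'.comp continuous_frobSq.measurable continuous_frobSq.measurable

lemma ProbabilityTheory.IndepFun.integrable_frobSq_mul (hXX' : IndepFun X X' μ)
    (hX2 : Integrable (fun ω => frobSq (X ω)) μ) (hX2' : Integrable (fun ω => frobSq (X' ω)) μ) :
    Integrable (fun ω => frobSq (X ω) * frobSq (X' ω)) μ :=
  hXX'.frobSq_comp.integrable_mul hX2 hX2'

lemma memLp_sgrad [IsFiniteMeasure μ] (hXX' : IndepFun X X' μ) (hX : AEStronglyMeasurable X μ)
    (hX' : AEStronglyMeasurable X' μ) (hX2 : Integrable (fun ω => frobSq (X ω)) μ)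
    (hX2' : Integrable (fun ω => frobSq (X' ω)) μ) (hmws : AEStronglyMeasurable ws μ)
    (hws : ∀ ω, ws ω ∈ simplex K) (hwt : wt ∈ simplex K) :
    MemLp (fun ω => sgrad (X ω) (X' ω) lam ρ wt (ws ω)) 2 μ := by
  have hmeas : AEStronglyMeasurable (fun ω => sgrad (X ω) (X' ω) lam ρ wt (ws ω)) μ :=
    (continuous_sgrad lam ρ wt).comp_aestronglyMeasurable (f := fun ω => (X ω, X' ω, ws ω))
      (hX.prodMk (hX'.prodMk hmws))
  have hbound := ((hXX'.integrable_frobSq_mul hX2 hX2').const_mul (2 * (1 + |lam|) ^ 2)).add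
    (integrable_const (2 * ρ ^ 2))
  refine (memLp_two_iff_integrable_sq_norm hmeas).mpr
    (hbound.mono' (hmeas.norm.pow 2) (ae_of_all _ fun ω => ?_))
  rw [Real.norm_eq_abs, abs_of_nonneg (sq_nonneg _)]
  exact norm_sgrad_sq_le _ _ lam ρ hwt (hws ω)

lemma integral_norm_sgrad_sq_le [IsProbabilityMeasure μ] {s : ℝ} (hXX' : IndepFun X X' μ)
    (hX : AEStronglyMeasurable X μ) (hX' : AEStronglyMeasurable X' μ)
    (hX2 : Integrable (fun ω => frobSq (X ω)) μ) (hX2' : Integrable (fun ω => frobSq (X' ω)) μ)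
    (hEX2 : ∫ ω, frobSq (X ω) ∂μ ≤ s) (hEX2' : ∫ ω, frobSq (X' ω) ∂μ ≤ s)
    (hmws : AEStronglyMeasurable ws μ) (hws : ∀ ω, ws ω ∈ simplex K) (hwt : wt ∈ simplex K) :
    ∫ ω, ‖sgrad (X ω) (X' ω) lam ρ wt (ws ω)‖ ^ 2 ∂μ
      ≤ 2 * (1 + |lam|) ^ 2 * s ^ 2 + 2 * ρ ^ 2 := by
  have hprod := hXX'.integrable_frobSq_mul hX2 hX2'
  have hEX0 : 0 ≤ ∫ ω, frobSq (X ω) ∂μ := integral_nonneg fun ω => frobSq_nonneg _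
  have hEX0' : 0 ≤ ∫ ω, frobSq (X' ω) ∂μ := integral_nonneg fun ω => frobSq_nonneg _
  calc ∫ ω, ‖sgrad (X ω) (X' ω) lam ρ wt (ws ω)‖ ^ 2 ∂μ
      ≤ ∫ ω, 2 * (1 + |lam|) ^ 2 * (frobSq (X ω) * frobSq (X' ω)) + 2 * ρ ^ 2 ∂μ :=
        integral_mono (memLp_sgrad hXX' hX hX' hX2 hX2' hmws hws hwt).integrable_norm_sq
          ((hprod.const_mul _).add (integrable_const _))
          fun ω => norm_sgrad_sq_le _ _ lam ρ hwt (hws ω)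
    _ = 2 * (1 + |lam|) ^ 2 * ((∫ ω, frobSq (X ω) ∂μ) * ∫ ω, frobSq (X' ω) ∂μ) + 2 * ρ ^ 2 := by
        rw [integral_add (hprod.const_mul _) (integrable_const _), integral_const_mul,
          hXX'.frobSq_comp.integral_fun_mul_eq_mul_integral hX2.1 hX2'.1]
        simp
    _ ≤ 2 * (1 + |lam|) ^ 2 * s ^ 2 + 2 * ρ ^ 2 := by
        rw [sq s]
        gcongr
        exact hEX0.trans hEX2

lemma integral_inner_sub_sgrad [IsFiniteMeasure μ] (hXX' : IndepFun X X' μ)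
    (hXw : IndepFun (fun ω => (X ω, X' ω)) ws μ) (hX : Integrable X μ) (hX' : Integrable X' μ)
    (hmws : Measurable ws) (hws : ∀ ω, ws ω ∈ simplex K) (c : Euc K) :
    ∫ ω, ⟪ws ω - c, sgrad (X ω) (X' ω) lam ρ wt (ws ω)⟫ ∂μ
      = ∫ ω, ⟪ws ω - c, sgrad (∫ ω, X ω ∂μ) (∫ ω, X' ω ∂μ) lam ρ wt (ws ω)⟫ ∂μ := by
  -- expand in coordinates (`inner_sgrad`): only the Gram entries `⟪X_i, X'_j⟫` are random
  -- apart from `w_s`, and they are independent of `R i j (w_s)`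
  set R : Fin K → Fin K → Euc K → ℝ := fun i j w => (w j + lam * wt j) * (w - c) i
  have hR : ∀ i j, Continuous (R i j) := fun i j => by fun_prop
  have hRint : ∀ i j, Integrable (fun ω => R i j (ws ω)) μ := fun i j =>
    integrable_comp_of_mem_simplex (hR i j) hmws.aestronglyMeasurable hws
  have hindep : ∀ i j, IndepFun (fun ω => X ω i) (fun ω => X' ω j) μ := fun i j =>
    hXX'.comp (measurable_pi_apply i) (measurable_pi_apply j)
  have hPint : ∀ i j, Integrable (fun ω => ⟪X ω i, X' ω j⟫) μ := fun i j =>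
    (hindep i j).integrable_bilin (hX.eval i) (hX'.eval j) (innerSL ℝ)
  have hterm : ∀ i j, Integrable (fun ω => ⟪X ω i, X' ω j⟫ * R i j (ws ω)) μ ∧
      ∫ ω, ⟪X ω i, X' ω j⟫ * R i j (ws ω) ∂μ
        = ∫ ω, ⟪(∫ ω, X ω ∂μ) i, (∫ ω, X' ω ∂μ) j⟫ * R i j (ws ω) ∂μ := fun i j => by
    obtain ⟨C, hC⟩ := isCompact_simplex.exists_bound_of_continuousOn (hR i j).continuousOn
    have hRm : AEStronglyMeasurable (fun ω => R i j (ws ω)) μ :=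
      (hR i j).comp_aestronglyMeasurable hmws.aestronglyMeasurable
    refine ⟨(hPint i j).mul_bdd hRm (ae_of_all _ fun ω => hC _ (hws ω)), ?_⟩
    have hind : IndepFun (fun ω => ⟪X ω i, X' ω j⟫) (fun ω => R i j (ws ω)) μ :=
      hXw.comp (φ := fun p : (Fin K → Euc m) × (Fin K → Euc m) => ⟪p.1 i, p.2 j⟫)
        (by fun_prop) (hR i j).measurable
    rw [hind.integral_fun_mul_eq_mul_integral (hPint i j).1 hRm, integral_const_mul,
      eval_integral hX.eval, eval_integral hX'.eval]
    congr 1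
    exact (hindep i j).integral_bilin (hX.eval i) (hX'.eval j) (innerSL ℝ)
  have hlast : Integrable (fun ω => ρ * ⟪ws ω - c, ws ω⟫) μ :=
    integrable_comp_of_mem_simplex (f := fun w => ρ * ⟪w - c, w⟫) (by fun_prop)
      hmws.aestronglyMeasurable hws
  have hsum : Integrable (fun ω => ∑ i, ∑ j, ⟪X ω i, X' ω j⟫ * R i j (ws ω)) μ :=
    integrable_finsetSum _ fun i _ => integrable_finsetSum _ fun j _ => (hterm i j).1
  have hsum' : Integrable (fun ω =>
      ∑ i, ∑ j, ⟪(∫ ω, X ω ∂μ) i, (∫ ω, X' ω ∂μ) j⟫ * R i j (ws ω)) μ :=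
    integrable_finsetSum _ fun i _ => integrable_finsetSum _ fun j _ => (hRint i j).const_mul _
  simp only [inner_sgrad]
  rw [integral_add hsum hlast, integral_add hsum' hlast,
    integral_finsetSum _ fun i _ => integrable_finsetSum _ fun j _ => (hterm i j).1,
    integral_finsetSum _ fun i _ => integrable_finsetSum _ fun j _ => (hRint i j).const_mul _]
  congr 1
  refine Finset.sum_congr rfl fun i _ => ?_
  rw [integral_finsetSum _ fun j _ => (hterm i j).1,
    integral_finsetSum _ fun j _ => (hRint i j).const_mul _]
  exact Finset.sum_congr rfl fun j _ => (hterm i j).2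

lemma mul_integral_norm_sub_sq_le_integral_inner_sgrad [IsFiniteMeasure μ] {g : Fin K → Euc m}
    {wρ : Euc K} (hXX' : IndepFun X X' μ) (hXw : IndepFun (fun ω => (X ω, X' ω)) ws μ)
    (hX : Integrable X μ) (hX' : Integrable X' μ) (hEX : ∫ ω, X ω ∂μ = g)
    (hEX' : ∫ ω, X' ω ∂μ = g) (hmws : Measurable ws) (hws : ∀ ω, ws ω ∈ simplex K)
    (hwρ : wρ ∈ simplex K)
    (hmin : IsMinOn (fun u => 1 / 2 * ‖comb g u + lam • comb g wt‖ ^ 2 + ρ / 2 * ‖u‖ ^ 2)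
      (simplex K) wρ) :
    ρ * ∫ ω, ‖ws ω - wρ‖ ^ 2 ∂μ ≤ ∫ ω, ⟪ws ω - wρ, sgrad (X ω) (X' ω) lam ρ wt (ws ω)⟫ ∂μ := by
  rw [integral_inner_sub_sgrad hXX' hXw hX hX' hmws hws wρ, hEX, hEX', ← integral_const_mul]
  refine integral_mono
    (integrable_comp_of_mem_simplex (f := fun w => ρ * ‖w - wρ‖ ^ 2) (by fun_prop)
      hmws.aestronglyMeasurable hws)
    (integrable_comp_of_mem_simplex (f := fun w => ⟪w - wρ, sgrad g g lam ρ wt w⟫)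
      (by unfold sgrad tvec comb; fun_prop) hmws.aestronglyMeasurable hws) fun ω => ?_
  exact mul_norm_sub_sq_le_inner_of_isMinOn (combₗ g) (tvec g) (inner_tvec g) convex_simplex
    (lam • comb g wt) ρ hwρ hmin (hws ω)

end Stochastic

theorem stmt4_general {m K : ℕ}
    {Ω : Type} [MeasurableSpace Ω] (μ : Measure Ω) [IsProbabilityMeasure μ]
    (g : Fin K → Euc m) (wt : Euc K) (hwt : wt ∈ simplex K)
    (lam ρ β σ0 Cg : ℝ)
    (hβ : 0 < β)
    -- the minimizer of the ρ-regularized objective over the simplex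
    (wρ : Euc K) (hwρmem : wρ ∈ simplex K)
    (hwρmin : ∀ u ∈ simplex K,
      (1/2) * ‖comb g wρ + lam • comb g wt‖ ^ 2 + (ρ/2) * ‖wρ‖ ^ 2
        ≤ (1/2) * ‖comb g u + lam • comb g wt‖ ^ 2 + (ρ/2) * ‖u‖ ^ 2)
    -- the current iterate and the stochastic gradient matrices
    (ws ws1 : Ω → Euc K) (X X' : Ω → (Fin K → Euc m))
    (hws : ∀ ω, ws ω ∈ simplex K)
    (hmws : Measurable ws)
    -- X and X' are independent, and (X, X') is independent of w_s
    (hXX' : IndepFun X X' μ)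
    (hXw : IndepFun (fun ω => (X ω, X' ω)) ws μ)
    -- unbiasedness, variance and norm bounds
    (hintX : Integrable X μ) (hintX' : Integrable X' μ)
    (hint2X : Integrable (fun ω => frobSq (X ω)) μ)
    (hint2X' : Integrable (fun ω => frobSq (X' ω)) μ)
    (hEX : ∫ ω, X ω ∂μ = g) (hEX' : ∫ ω, X' ω ∂μ = g)
    (hvarX : ∫ ω, frobSq (fun i => X ω i - g i) ∂μ ≤ K * σ0 ^ 2)
    (hvarX' : ∫ ω, frobSq (fun i => X' ω i - g i) ∂μ ≤ K * σ0 ^ 2)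
    (hG : frob g ≤ Cg)
    -- the projected stochastic-gradient step
    (hstep : ∀ ω, projOn (simplex K)
      (ws ω - β • (tvec (X ω)
          (comb (X' ω) (ws ω) + lam • comb (X' ω) wt) + ρ • ws ω))
      (ws1 ω)) :
    ∫ ω, ‖ws1 ω - wρ‖ ^ 2 ∂μ
      ≤ (1 - 2 * β * ρ) * ∫ ω, ‖ws ω - wρ‖ ^ 2 ∂μ
        + 3 * β ^ 2 * (4 * (1 + lam ^ 2) * ((K : ℝ) * σ0 ^ 2 + Cg ^ 2) ^ 2 + ρ ^ 2) := by
  set S : ℝ := (K : ℝ) * σ0 ^ 2 + Cg ^ 2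
  have hd : MemLp (fun ω => ws ω - wρ) 2 μ :=
    memLp_comp_of_mem_simplex (f := fun w => w - wρ) (by fun_prop) hmws.aestronglyMeasurable
      hws 2
  have hs : MemLp (fun ω => sgrad (X ω) (X' ω) lam ρ wt (ws ω)) 2 μ :=
    memLp_sgrad hXX' hintX.1 hintX'.1 hint2X hint2X' hmws.aestronglyMeasurable hws hwt
  have hdrift := mul_integral_norm_sub_sq_le_integral_inner_sgrad hXX' hXw hintX hintX' hEX hEX'
    hmws hws hwρmem (isMinOn_iff.mpr hwρmin)
  have hnoise := integral_norm_sgrad_sq_le (lam := lam) (ρ := ρ) hXX' hintX.1 hintX'.1 hint2X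
    hint2X' (integral_frobSq_le hintX hint2X hEX hvarX hG)
    (integral_frobSq_le hintX' hint2X' hEX' hvarX' hG) hmws.aestronglyMeasurable hws hwt
  have hC₁ : 2 * (1 + |lam|) ^ 2 * S ^ 2 + 2 * ρ ^ 2
      ≤ 3 * (4 * (1 + lam ^ 2) * S ^ 2 + ρ ^ 2) := by
    nlinarith [sq_nonneg (1 - |lam|), sq_abs lam, sq_nonneg S, sq_nonneg ρ]
  calc ∫ ω, ‖ws1 ω - wρ‖ ^ 2 ∂μ
      ≤ ∫ ω, ‖(ws ω - wρ) - β • sgrad (X ω) (X' ω) lam ρ wt (ws ω)‖ ^ 2 ∂μ := by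
        refine integral_mono_of_nonneg (ae_of_all _ fun ω => sq_nonneg _)
          (hd.sub (hs.const_smul β)).integrable_norm_sq (ae_of_all _ fun ω => ?_)
        have hproj := norm_sub_sq_le_of_projOn convex_simplex (hstep ω) hwρmem
        rwa [sub_right_comm] at hproj
    _ = ∫ ω, ‖ws ω - wρ‖ ^ 2 ∂μ
          - 2 * β * ∫ ω, ⟪ws ω - wρ, sgrad (X ω) (X' ω) lam ρ wt (ws ω)⟫ ∂μ
          + β ^ 2 * ∫ ω, ‖sgrad (X ω) (X' ω) lam ρ wt (ws ω)‖ ^ 2 ∂μ :=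
        integral_norm_sub_smul_sq hd hs β
    _ ≤ _ := by
        nlinarith [mul_le_mul_of_nonneg_left hdrift (by positivity : (0 : ℝ) ≤ 2 * β),
          mul_le_mul_of_nonneg_left (hnoise.trans hC₁) (sq_nonneg β)]

/-- One step of projected SGD on the ρ-regularized objective
`f(w) = (1/2)‖Gw + λg₀‖² + (ρ/2)‖w‖²` (with `g₀ = Gw̃`) contracts:
`E‖w_{s+1} − w*_{ρ,λ}‖² ≤ (1 − 2βρ)E‖w_s − w*_{ρ,λ}‖² + 3β²C₁`,
where `C₁ = 4(1+λ²)(Kσ₀² + C_g²)² + ρ²`. -/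
theorem stmt4 {m K : ℕ} (hK : 2 ≤ K) (hm : 1 ≤ m)
    {Ω : Type} [MeasurableSpace Ω] (μ : Measure Ω) [IsProbabilityMeasure μ]
    (g : Fin K → Euc m) (wt : Euc K) (hwt : wt ∈ simplex K)
    (lam ρ β σ0 Cg : ℝ)
    (hlam : 0 ≤ lam) (hρ : 0 < ρ) (hβ : 0 < β) (hσ0 : 0 ≤ σ0) (hCg : 0 < Cg)
    -- the minimizer of the ρ-regularized objective over the simplex
    (wρ : Euc K) (hwρmem : wρ ∈ simplex K)
    (hwρmin : ∀ u ∈ simplex K,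
      (1/2) * ‖comb g wρ + lam • comb g wt‖ ^ 2 + (ρ/2) * ‖wρ‖ ^ 2
        ≤ (1/2) * ‖comb g u + lam • comb g wt‖ ^ 2 + (ρ/2) * ‖u‖ ^ 2)
    -- the current iterate and the stochastic gradient matrices
    (ws ws1 : Ω → Euc K) (X X' : Ω → (Fin K → Euc m))
    (hws : ∀ ω, ws ω ∈ simplex K)
    (hmws : Measurable ws) (hmX : Measurable X) (hmX' : Measurable X')
    -- X and X' are independent, and (X, X') is independent of w_s
    (hXX' : IndepFun X X' μ)
    (hXw : IndepFun (fun ω => (X ω, X' ω)) ws μ)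
    -- unbiasedness, variance and norm bounds
    (hintX : Integrable X μ) (hintX' : Integrable X' μ)
    (hint2X : Integrable (fun ω => frobSq (X ω)) μ)
    (hint2X' : Integrable (fun ω => frobSq (X' ω)) μ)
    (hint4X : Integrable (fun ω => (frobSq (X ω)) ^ 2) μ)
    (hint4X' : Integrable (fun ω => (frobSq (X' ω)) ^ 2) μ)
    (hEX : ∫ ω, X ω ∂μ = g) (hEX' : ∫ ω, X' ω ∂μ = g)
    (hvarX : ∫ ω, frobSq (fun i => X ω i - g i) ∂μ ≤ K * σ0 ^ 2)
    (hvarX' : ∫ ω, frobSq (fun i => X' ω i - g i) ∂μ ≤ K * σ0 ^ 2)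
    (hG : frob g ≤ Cg)
    -- the projected stochastic-gradient step
    (hstep : ∀ ω, projOn (simplex K)
      (ws ω - β • (tvec (X ω)
          (comb (X' ω) (ws ω) + lam • comb (X' ω) wt) + ρ • ws ω))
      (ws1 ω)) :
    ∫ ω, ‖ws1 ω - wρ‖ ^ 2 ∂μ
      ≤ (1 - 2 * β * ρ) * ∫ ω, ‖ws ω - wρ‖ ^ 2 ∂μ
        + 3 * β ^ 2 * (4 * (1 + lam ^ 2) * ((K : ℝ) * σ0 ^ 2 + Cg ^ 2) ^ 2 + ρ ^ 2) :=
  stmt4_general μ g wt hwt lam ρ β σ0 Cg hβ wρ hwρmem hwρmin ws ws1 X X' hws hmws hXX' hXw hintX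
    hintX' hint2X hint2X' hEX hEX' hvarX hvarX' hG hstep
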